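/- Let τ = [[τ₁, τ₂], [τ₂, τ₃]] be a complex symmetric 2×2 matrix whose imaginary part is positive definite. If (a, b, c, d, e) ∈ ℝ⁵ is nonzero and satisfies a·τ₁ + b·τ₂ + c·τ₃ + d·(τ₂² − τ₁·τ₃) + e = 0, then b² − 4ac − 4de > 0. -/

import Mathlib

/-!
Write `τ = X + iY`. The real and imaginary parts of the relation are two real equations, and
combining them with suitable multiples gives the identity
`y₃² (b² - 4ac - 4de) = (b' y₃ + 2 a' y₂)² + 4 a'² det Y + 4 d² y₃² det Y`
with `a' = a - d x₃`, `b' = b + 2 d x₂`. Since `Y` is positive definite, the right-hand side is a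
sum of nonnegative terms that vanishes only when `a' = b' = d = 0`, and then the two real equations
force `a = b = c = e = 0` as well.
-/

namespace SingularRelation

variable {τ₁ τ₂ τ₃ : ℂ} {a b c d e : ℝ}

lemma re_eq_zero (h : (a : ℂ) * τ₁ + (b : ℂ) * τ₂ + (c : ℂ) * τ₃ +
      (d : ℂ) * (τ₂ ^ 2 - τ₁ * τ₃) + (e : ℂ) = 0) :
    a * τ₁.re + b * τ₂.re + c * τ₃.re +
      d * (τ₂.re ^ 2 - τ₂.im ^ 2 - τ₁.re * τ₃.re + τ₁.im * τ₃.im) + e = 0 := by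
  have := congrArg Complex.re h
  simp only [Complex.add_re, Complex.mul_re, Complex.sub_re, Complex.ofReal_re,
    Complex.ofReal_im, pow_two, Complex.zero_re] at this
  linear_combination this

lemma im_eq_zero (h : (a : ℂ) * τ₁ + (b : ℂ) * τ₂ + (c : ℂ) * τ₃ +
      (d : ℂ) * (τ₂ ^ 2 - τ₁ * τ₃) + (e : ℂ) = 0) :
    a * τ₁.im + b * τ₂.im + c * τ₃.im +
      d * (2 * τ₂.re * τ₂.im - τ₁.re * τ₃.im - τ₁.im * τ₃.re) = 0 := by
  have := congrArg Complex.im h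
  simp only [Complex.add_im, Complex.mul_im, Complex.sub_im, Complex.ofReal_re,
    Complex.ofReal_im, pow_two, Complex.zero_im] at this
  linear_combination this

lemma sq_mul_discriminant_eq {x₁ x₂ x₃ y₁ y₂ y₃ : ℝ}
    (hre : a * x₁ + b * x₂ + c * x₃ + d * (x₂ ^ 2 - y₂ ^ 2 - x₁ * x₃ + y₁ * y₃) + e = 0)
    (him : a * y₁ + b * y₂ + c * y₃ + d * (2 * x₂ * y₂ - x₁ * y₃ - y₁ * x₃) = 0) :
    y₃ ^ 2 * (b ^ 2 - 4 * a * c - 4 * d * e) =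
      ((b + 2 * d * x₂) * y₃ + 2 * (a - d * x₃) * y₂) ^ 2 +
        4 * (a - d * x₃) ^ 2 * (y₁ * y₃ - y₂ ^ 2) +
        4 * d ^ 2 * (y₁ * y₃ - y₂ ^ 2) * y₃ ^ 2 := by
  linear_combination (-4 * (a - d * x₃) * y₃) * him + (-4 * d * y₃ ^ 2) * hre

end SingularRelation

lemma eq_zero_of_sq_add_nonpos {p q d y₂ y₃ D : ℝ} (hD : 0 < D) (hy₃ : 0 < y₃)
    (h : (p * y₃ + 2 * q * y₂) ^ 2 + 4 * q ^ 2 * D + 4 * d ^ 2 * D * y₃ ^ 2 ≤ 0) :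
    p = 0 ∧ q = 0 ∧ d = 0 := by
  have h₁ : 0 ≤ (p * y₃ + 2 * q * y₂) ^ 2 := sq_nonneg _
  have h₂ : 0 ≤ q ^ 2 * D := by positivity
  have h₃ : 0 ≤ d ^ 2 * D * y₃ ^ 2 := by positivity
  have hq : q = 0 := by simpa [hD.ne'] using (show q ^ 2 * D = 0 by linarith)
  have hd : d = 0 := by simpa [hD.ne', hy₃.ne'] using (show d ^ 2 * D * y₃ ^ 2 = 0 by linarith)
  subst hq
  have hp : (p * y₃) ^ 2 = 0 := by simp only [mul_zero, zero_mul, add_zero] at h₁ h; linarith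
  exact ⟨by simpa [hy₃.ne'] using hp, rfl, hd⟩

open SingularRelation in
theorem stmt8 (τ₁ τ₂ τ₃ : ℂ)
    (hpos : (!![τ₁.im, τ₂.im; τ₂.im, τ₃.im] : Matrix (Fin 2) (Fin 2) ℝ).PosDef)
    (a b c d e : ℝ) (hne : (a, b, c, d, e) ≠ (0, 0, 0, 0, 0))
    (hrel : (a : ℂ) * τ₁ + (b : ℂ) * τ₂ + (c : ℂ) * τ₃ +
      (d : ℂ) * (τ₂ ^ 2 - τ₁ * τ₃) + (e : ℂ) = 0) :
    0 < b ^ 2 - 4 * a * c - 4 * d * e := by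
  have hdet : 0 < τ₁.im * τ₃.im - τ₂.im ^ 2 := by
    simpa [Matrix.det_fin_two_of, sq] using hpos.det_pos
  have hy₃ : 0 < τ₃.im := by simpa using hpos.diag_pos (i := 1)
  have hre := re_eq_zero hrel
  have him := im_eq_zero hrel
  by_contra! hΔ
  obtain ⟨hb, ha, rfl⟩ := eq_zero_of_sq_add_nonpos hdet hy₃ <|
    sq_mul_discriminant_eq hre him ▸ mul_nonpos_of_nonneg_of_nonpos (sq_nonneg τ₃.im) hΔ
  obtain rfl : a = 0 := by simpa using ha
  obtain rfl : b = 0 := by simpa using hb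
  obtain rfl : c = 0 := by simpa [hy₃.ne'] using him
  obtain rfl : e = 0 := by simpa using hre
  exact hne rfl
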